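/- Let T_t^Neu be the Neumann heat semigroup on (0,∞): for g : (0,∞) → ℝ, (T_t^Neu g)(x) = (4πt)^{-1/2} ∫_0^∞ [e^{-(x−y)²/(4t)} + e^{-(x+y)²/(4t)}] g(y) dy. Then for u > 0, t > 0, and H_u = 1_{[u,∞)}, one has ∫_u^∞ (1 − (T_t^Neu H_u)(x)) dx = √(t/π)(1 − e^{-u²/t}) + 2u·Φ_{2t}(2u), where Φ_{2t}(x) = ∫_x^∞ (4πt)^{-1/2} e^{-v²/(4t)} dv. -/

import Mathlib

/-!
Write `g_t` for the Gaussian kernel of variance `2t` and `Φ(a) = ∫_a^∞ g_t`. Since `H_u`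
vanishes on `(0, u)`, the Neumann kernel applied to `H_u` is `Φ(u - x) + Φ(u + x)`, so by the
symmetry `Φ(-a) = 1 - Φ(a)` the integrand is `Φ(x - u) - Φ(x + u)`. The tail `Φ` has the
explicit primitive `P(s) = s Φ(s) - 2t g_t(s)` (because `g_t' = -(s / 2t) g_t`), which tends
to `0` at infinity, so the integral equals `P(2u) - P(0)`.
-/

open Real MeasureTheory Set Filter Topology

noncomputable def heatKernel (t x : ℝ) : ℝ := exp (-x ^ 2 / (4 * t)) / √(4 * π * t)

noncomputable def heatKernelTail (t a : ℝ) : ℝ := ∫ x in Ici a, heatKernel t x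

noncomputable def heatKernelTailPrimitive (t s : ℝ) : ℝ :=
  s * heatKernelTail t s - 2 * t * heatKernel t s

theorem setIntegral_Ici_comp_add_right {E : Type*} [NormedAddCommGroup E] [NormedSpace ℝ E]
    (f : ℝ → E) (a c : ℝ) :
    ∫ y in Ici a, f (y + c) = ∫ y in Ici (a + c), f y := by
  have h := (measurePreserving_add_right volume c).setIntegral_preimage_emb
    (measurableEmbedding_addRight c) f (Ici (a + c))
  rwa [preimage_add_const_Ici, add_sub_cancel_right] at h

section HeatKernel

variable {t : ℝ}

theorem heatKernel_nonneg (x : ℝ) : 0 ≤ heatKernel t x := by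
  unfold heatKernel
  positivity

theorem heatKernel_neg (x : ℝ) : heatKernel t (-x) = heatKernel t x := by
  simp only [heatKernel, even_two, Even.neg_pow]

theorem continuous_heatKernel : Continuous (heatKernel t) := by
  unfold heatKernel
  fun_prop

theorem heatKernel_eq_gaussian :
    heatKernel t = fun x ↦ exp (-(1 / (4 * t)) * x ^ 2) / √(4 * π * t) := by
  ext x
  rw [heatKernel, neg_div, neg_mul, one_div_mul_eq_div]

theorem integrable_heatKernel (ht : 0 < t) : Integrable (heatKernel t) := by
  rw [heatKernel_eq_gaussian]
  exact (integrable_exp_neg_mul_sq (by positivity)).div_const _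

theorem integral_heatKernel (ht : 0 < t) : ∫ x, heatKernel t x = 1 := by
  rw [heatKernel_eq_gaussian, integral_div, integral_gaussian,
    show π / (1 / (4 * t)) = 4 * π * t by field_simp]
  exact div_self (by positivity)

theorem hasDerivAt_heatKernel (x : ℝ) :
    HasDerivAt (heatKernel t) (-(x / (2 * t)) * heatKernel t x) x := by
  have h : HasDerivAt (fun y : ℝ ↦ -y ^ 2 / (4 * t)) (-(2 * x) / (4 * t)) x := by
    simpa using (hasDerivAt_pow 2 x).neg.div_const (4 * t)
  refine (h.exp.div_const √(4 * π * t)).congr_deriv ?_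
  rw [heatKernel]
  ring

theorem tendsto_heatKernel_atTop (ht : 0 < t) : Tendsto (heatKernel t) atTop (𝓝 0) := by
  have hexp : Tendsto (fun x : ℝ ↦ -x ^ 2 / (4 * t)) atTop atBot := by
    simp_rw [neg_div]
    exact tendsto_neg_atTop_atBot.comp
      ((tendsto_pow_atTop two_ne_zero).atTop_div_const (by positivity))
  unfold heatKernel
  simpa using (tendsto_exp_atBot.comp hexp).div_const √(4 * π * t)

theorem hasDerivAt_neg_two_mul_heatKernel (ht : 0 < t) (x : ℝ) :
    HasDerivAt (fun y ↦ -(2 * t * heatKernel t y)) (x * heatKernel t x) x := by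
  refine ((hasDerivAt_heatKernel x).const_mul (2 * t)).neg.congr_deriv ?_
  field_simp

theorem integral_Ioi_mul_heatKernel (ht : 0 < t) {s : ℝ} (hs : 0 ≤ s) :
    IntegrableOn (fun x ↦ x * heatKernel t x) (Ioi s) ∧
      ∫ x in Ioi s, x * heatKernel t x = 2 * t * heatKernel t s := by
  have hderiv := fun x (_ : x ∈ Ici s) ↦ hasDerivAt_neg_two_mul_heatKernel ht x
  have hnonneg : ∀ x ∈ Ioi s, 0 ≤ x * heatKernel t x :=
    fun x hx ↦ mul_nonneg (hs.trans hx.le) (heatKernel_nonneg x)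
  have hlim : Tendsto (fun y ↦ -(2 * t * heatKernel t y)) atTop (𝓝 0) := by
    simpa using ((tendsto_heatKernel_atTop ht).const_mul (2 * t)).neg
  refine ⟨integrableOn_Ioi_deriv_of_nonneg' hderiv hnonneg hlim, ?_⟩
  rw [integral_Ioi_of_hasDerivAt_of_nonneg' hderiv hnonneg hlim]
  ring

end HeatKernel

section HeatKernelTail

variable {t : ℝ}

theorem heatKernelTail_nonneg (a : ℝ) : 0 ≤ heatKernelTail t a :=
  setIntegral_nonneg measurableSet_Ici fun x _ ↦ heatKernel_nonneg x

theorem heatKernelTail_antitone (ht : 0 < t) : Antitone (heatKernelTail t) := fun _ _ hab ↦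
  setIntegral_mono_set (integrable_heatKernel ht).integrableOn
    (.of_forall heatKernel_nonneg) (Ici_subset_Ici.mpr hab).eventuallyLE

theorem heatKernelTail_neg (ht : 0 < t) (a : ℝ) :
    heatKernelTail t (-a) = 1 - heatKernelTail t a := by
  have hsplit := integral_add_compl (measurableSet_Iic (a := a)) (integrable_heatKernel ht)
  have hreflect := integral_comp_neg_Iic a (heatKernel t)
  simp only [heatKernel_neg] at hreflect
  rw [compl_Iic, integral_heatKernel ht, hreflect] at hsplit
  rw [heatKernelTail, heatKernelTail, integral_Ici_eq_integral_Ioi, integral_Ici_eq_integral_Ioi]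
  linarith

theorem hasDerivAt_heatKernelTail (ht : 0 < t) (a : ℝ) :
    HasDerivAt (heatKernelTail t) (-heatKernel t a) a := by
  have hF : HasDerivAt (fun b ↦ ∫ x in (0 : ℝ)..b, heatKernel t x) (heatKernel t a) a :=
    intervalIntegral.integral_hasDerivAt_right (integrable_heatKernel ht).intervalIntegrable
      (continuous_heatKernel.stronglyMeasurableAtFilter _ _) continuous_heatKernel.continuousAt
  refine (hF.const_sub (heatKernelTail t 0)).congr_of_eventuallyEq (.of_forall fun b ↦ ?_)
  dsimp only
  rw [← intervalIntegral.integral_Ici_sub_Ici' (integrable_heatKernel ht).integrableOn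
    (integrable_heatKernel ht).integrableOn, heatKernelTail, heatKernelTail]
  ring

theorem tendsto_mul_heatKernelTail_atTop (ht : 0 < t) :
    Tendsto (fun s ↦ s * heatKernelTail t s) atTop (𝓝 0) := by
  have hupper : Tendsto (fun s ↦ 2 * t * heatKernel t s) atTop (𝓝 0) := by
    simpa using (tendsto_heatKernel_atTop ht).const_mul (2 * t)
  refine tendsto_of_tendsto_of_tendsto_of_le_of_le' tendsto_const_nhds hupper ?_ ?_
  · filter_upwards [eventually_ge_atTop 0] with s hs
    exact mul_nonneg hs (heatKernelTail_nonneg s)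
  · filter_upwards [eventually_ge_atTop 0] with s hs
    obtain ⟨hint, hval⟩ := integral_Ioi_mul_heatKernel ht hs
    -- `s Φ(s) = ∫_s^∞ s g_t ≤ ∫_s^∞ x g_t(x) = 2t g_t(s)`
    rw [heatKernelTail, integral_Ici_eq_integral_Ioi, ← integral_const_mul, ← hval]
    exact setIntegral_mono_on ((integrable_heatKernel ht).const_mul s).integrableOn hint
      measurableSet_Ioi fun x hx ↦ mul_le_mul_of_nonneg_right hx.le (heatKernel_nonneg x)

theorem hasDerivAt_heatKernelTailPrimitive (ht : 0 < t) (s : ℝ) :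
    HasDerivAt (heatKernelTailPrimitive t) (heatKernelTail t s) s := by
  have h := ((hasDerivAt_id s).mul (hasDerivAt_heatKernelTail ht s)).sub
    ((hasDerivAt_heatKernel (t := t) s).const_mul (2 * t))
  refine h.congr_deriv ?_
  simp only [id_eq]
  field_simp
  ring

theorem tendsto_heatKernelTailPrimitive_atTop (ht : 0 < t) :
    Tendsto (heatKernelTailPrimitive t) atTop (𝓝 0) := by
  unfold heatKernelTailPrimitive
  simpa using (tendsto_mul_heatKernelTail_atTop ht).sub
    ((tendsto_heatKernel_atTop ht).const_mul (2 * t))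

theorem integral_Ioi_heatKernelTail_sub (ht : 0 < t) {a b : ℝ} (hab : a ≤ b) (c : ℝ) :
    ∫ x in Ioi c, (heatKernelTail t (x + a) - heatKernelTail t (x + b)) =
      heatKernelTailPrimitive t (c + b) - heatKernelTailPrimitive t (c + a) := by
  have hderiv : ∀ x ∈ Ici c, HasDerivAt
      (fun x ↦ heatKernelTailPrimitive t (x + a) - heatKernelTailPrimitive t (x + b))
      (heatKernelTail t (x + a) - heatKernelTail t (x + b)) x := fun x _ ↦
    ((hasDerivAt_heatKernelTailPrimitive ht _).comp_add_const x a).sub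
      ((hasDerivAt_heatKernelTailPrimitive ht _).comp_add_const x b)
  have hnonneg : ∀ x ∈ Ioi c, 0 ≤ heatKernelTail t (x + a) - heatKernelTail t (x + b) :=
    fun x _ ↦ sub_nonneg.mpr (heatKernelTail_antitone ht (by linarith))
  have hlim (d : ℝ) : Tendsto (fun x ↦ heatKernelTailPrimitive t (x + d)) atTop (𝓝 0) :=
    (tendsto_heatKernelTailPrimitive_atTop ht).comp (tendsto_atTop_add_const_right _ d tendsto_id)
  rw [integral_Ioi_of_hasDerivAt_of_nonneg' hderiv hnonneg (by simpa using (hlim a).sub (hlim b))]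
  ring

end HeatKernelTail

theorem integral_neumannKernel_mul_heaviside {t u : ℝ} (ht : 0 < t) (hu : 0 < u) (x : ℝ) :
    ∫ y in Ioi (0 : ℝ), (exp (-(x - y) ^ 2 / (4 * t)) + exp (-(x + y) ^ 2 / (4 * t)))
        * (if u ≤ y then (1 : ℝ) else 0) / √(4 * π * t) =
      heatKernelTail t (u - x) + heatKernelTail t (u + x) := by
  have hintegrand (y : ℝ) :
      (exp (-(x - y) ^ 2 / (4 * t)) + exp (-(x + y) ^ 2 / (4 * t)))
        * (if u ≤ y then (1 : ℝ) else 0) / √(4 * π * t) =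
      (Ici u).indicator (fun y ↦ heatKernel t (y + -x) + heatKernel t (y + x)) y := by
    by_cases h : u ≤ y
    · rw [indicator_of_mem (mem_Ici.mpr h), if_pos h, mul_one, heatKernel, heatKernel,
        ← add_div, ← sub_eq_add_neg, sub_sq_comm, add_comm y x]
    · rw [indicator_of_notMem (by simpa using h), if_neg h, mul_zero, zero_div]
  have hIoi : Ioi (0 : ℝ) ∩ Ici u = Ici u := inter_eq_self_of_subset_right (Ici_subset_Ioi.mpr hu)
  simp_rw [hintegrand]
  rw [setIntegral_indicator measurableSet_Ici, hIoi,
    integral_add ((integrable_heatKernel ht).comp_add_right _).integrableOn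
      ((integrable_heatKernel ht).comp_add_right _).integrableOn,
    setIntegral_Ici_comp_add_right, setIntegral_Ici_comp_add_right, ← sub_eq_add_neg]
  rfl

theorem two_mul_div_sqrt_four_pi_mul {t : ℝ} (ht : 0 < t) :
    2 * t / √(4 * π * t) = √(t / π) := by
  rw [div_eq_iff (by positivity), ← sqrt_mul (by positivity),
    show t / π * (4 * π * t) = (2 * t) ^ 2 by field_simp; ring, sqrt_sq (by positivity)]

theorem neumann_semigroup_heaviside_variance (t u : ℝ) (ht : 0 < t) (hu : 0 < u) :
    (∫ x in Set.Ici u,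
      (1 - ∫ y in Set.Ioi (0 : ℝ),
        (Real.exp (-(x - y) ^ 2 / (4 * t)) + Real.exp (-(x + y) ^ 2 / (4 * t)))
          * (if u ≤ y then (1 : ℝ) else 0) / Real.sqrt (4 * Real.pi * t)))
    = Real.sqrt (t / Real.pi) * (1 - Real.exp (-u ^ 2 / t))
      + 2 * u * ∫ v in Set.Ici (2 * u),
          Real.exp (-v ^ 2 / (4 * t)) / Real.sqrt (4 * Real.pi * t) := by
  have hintegrand (x : ℝ) : 1 - ∫ y in Ioi (0 : ℝ),
      (exp (-(x - y) ^ 2 / (4 * t)) + exp (-(x + y) ^ 2 / (4 * t)))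
        * (if u ≤ y then (1 : ℝ) else 0) / √(4 * π * t) =
      heatKernelTail t (x + -u) - heatKernelTail t (x + u) := by
    rw [integral_neumannKernel_mul_heaviside ht hu, show u - x = -(x + -u) by ring,
      heatKernelTail_neg ht, add_comm u x]
    ring
  have hkernel_zero : heatKernel t 0 = 1 / √(4 * π * t) := by simp [heatKernel]
  have hkernel_two_mul : heatKernel t (2 * u) = exp (-u ^ 2 / t) / √(4 * π * t) := by
    rw [heatKernel, show -(2 * u) ^ 2 / (4 * t) = -u ^ 2 / t by field_simp; ring]
  simp_rw [hintegrand]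
  rw [integral_Ici_eq_integral_Ioi, integral_Ioi_heatKernelTail_sub ht (by linarith),
    add_neg_cancel, ← two_mul, heatKernelTailPrimitive, heatKernelTailPrimitive, hkernel_zero,
    hkernel_two_mul, ← two_mul_div_sqrt_four_pi_mul ht, heatKernelTail]
  simp only [heatKernel]
  ring
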